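/- For α ∈ ℂ with α ≠ 0, let 𝒜₁₄₇(α) be the Leibniz algebra on ℂ⁵ with basis x₁,…,x₅ and nonzero products [x₁,x₁] = x₄, [x₂,x₃] = α x₅, [x₃,x₂] = x₅, [x₁,x₄] = x₅. Then 𝒜₁₄₇(α) and 𝒜₁₄₇(1/α) are isomorphic as Leibniz algebras. -/
import Mathlib


/-- The left Leibniz identity for a bilinear bracket:
`[a,[b,c]] = [[a,b],c] + [b,[a,c]]`. -/
def IsLeibnizBracket {K A : Type*} [CommRing K] [AddCommGroup A] [Module K A]
    (br : A →ₗ[K] A →ₗ[K] A) : Prop :=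
  ∀ a b c : A, br a (br b c) = br (br a b) c + br b (br a c)

/-- The span of all brackets `[s,t]` with `s ∈ S`, `t ∈ T`. -/
def bracketSpan {K A : Type*} [CommRing K] [AddCommGroup A] [Module K A]
    (br : A →ₗ[K] A →ₗ[K] A) (S T : Submodule K A) : Submodule K A :=
  Submodule.span K {x | ∃ s ∈ S, ∃ t ∈ T, br s t = x}

/-- Lower central series: `lcs br n = A^(n+1)`, i.e. `lcs br 0 = A¹ = A` and
`lcs br (n+1) = [A, lcs br n]`. -/
def lcs {K A : Type*} [CommRing K] [AddCommGroup A] [Module K A]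
    (br : A →ₗ[K] A →ₗ[K] A) : ℕ → Submodule K A
  | 0 => ⊤
  | n + 1 => bracketSpan br ⊤ (lcs br n)

/-- `Leib(A)`: the span of all squares `[a,a]`. -/
def leibIdeal {K A : Type*} [CommRing K] [AddCommGroup A] [Module K A]
    (br : A →ₗ[K] A →ₗ[K] A) : Submodule K A :=
  Submodule.span K {x | ∃ a : A, br a a = x}

/-- The center `Z(A) = {x : [a,x] = 0 = [x,a] for all a}`. -/
def leibnizCenter {K A : Type*} [CommRing K] [AddCommGroup A] [Module K A]
    (br : A →ₗ[K] A →ₗ[K] A) : Submodule K A where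
  carrier := {x | ∀ a : A, br a x = 0 ∧ br x a = 0}
  add_mem' := by
    intro x y hx hy a
    constructor <;>
      simp [map_add, LinearMap.add_apply, (hx a).1, (hx a).2, (hy a).1, (hy a).2]
  zero_mem' := by
    intro a
    constructor <;> simp
  smul_mem' := by
    intro c x hx a
    constructor <;>
      simp [map_smul, LinearMap.smul_apply, (hx a).1, (hx a).2]

/-- Two-sided ideal of a Leibniz algebra. -/
def IsLeibnizIdeal {K A : Type*} [CommRing K] [AddCommGroup A] [Module K A]
    (br : A →ₗ[K] A →ₗ[K] A) (I : Submodule K A) : Prop :=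
  ∀ a : A, ∀ x ∈ I, br a x ∈ I ∧ br x a ∈ I

/-- The `i`-th standard basis vector of `ℂ⁵`. -/
noncomputable def e (i : Fin 5) : Fin 5 → ℂ := Pi.single i 1

/-- Structure constants of `𝒜₁₄₇(α)`: nonzero products `[x₁,x₁]=x₄`,
`[x₂,x₃]=α x₅`, `[x₃,x₂]=x₅`, `[x₁,x₄]=x₅`. -/
noncomputable def c147 (α : ℂ) (i j : Fin 5) : Fin 5 → ℂ :=
  if i = 0 ∧ j = 0 then e 3
  else if i = 1 ∧ j = 2 then α • e 4
  else if i = 2 ∧ j = 1 then e 4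
  else if i = 0 ∧ j = 3 then e 4
  else 0

/-- The rescaling/swap linear map used to build the isomorphism. -/
noncomputable def phiL (μ : ℂ) : (Fin 5 → ℂ) →ₗ[ℂ] (Fin 5 → ℂ) where
  toFun a := ![μ * a 0, a 2, a 1, μ ^ 2 * a 3, μ ^ 3 * a 4]
  map_add' a b := by
    funext i; fin_cases i <;> simp [Matrix.cons_val_zero, Matrix.cons_val_one] <;> ring
  map_smul' c a := by
    funext i; fin_cases i <;> simp [Matrix.cons_val_zero, Matrix.cons_val_one] <;> ring

lemma phiL_e0 (μ : ℂ) : phiL μ (e 0) = μ • e 0 := by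
  funext i; fin_cases i <;> simp [phiL, e, Pi.single]
lemma phiL_e1 (μ : ℂ) : phiL μ (e 1) = e 2 := by
  funext i; fin_cases i <;> simp [phiL, e, Pi.single]
lemma phiL_e2 (μ : ℂ) : phiL μ (e 2) = e 1 := by
  funext i; fin_cases i <;> simp [phiL, e, Pi.single]
lemma phiL_e3 (μ : ℂ) : phiL μ (e 3) = (μ ^ 2) • e 3 := by
  funext i; fin_cases i <;> simp [phiL, e, Pi.single]
lemma phiL_e4 (μ : ℂ) : phiL μ (e 4) = (μ ^ 3) • e 4 := by
  funext i; fin_cases i <;> simp [phiL, e, Pi.single]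

/-- For `α ∈ ℂ`, `α ≠ 0`, the Leibniz algebras `𝒜₁₄₇(α)` and `𝒜₁₄₇(1/α)` are
isomorphic: there is a linear equivalence intertwining the brackets. -/
theorem stmt19 (α : ℂ) (hα : α ≠ 0)
    (br₁ br₂ : (Fin 5 → ℂ) →ₗ[ℂ] (Fin 5 → ℂ) →ₗ[ℂ] (Fin 5 → ℂ))
    (h₁ : ∀ i j : Fin 5, br₁ (e i) (e j) = c147 α i j)
    (h₂ : ∀ i j : Fin 5, br₂ (e i) (e j) = c147 α⁻¹ i j) :
    ∃ φ : (Fin 5 → ℂ) ≃ₗ[ℂ] (Fin 5 → ℂ),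
      ∀ a b : Fin 5 → ℂ, φ (br₁ a b) = br₂ (φ a) (φ b) := by
  obtain ⟨l, hl⟩ : ∃ l : ℂ, l ^ 3 = α⁻¹ :=
    IsAlgClosed.exists_pow_nat_eq α⁻¹ (by norm_num)
  have hl0 : l ≠ 0 := fun h =>
    hα (inv_eq_zero.mp (by rw [← hl, h]; norm_num))
  have hinv : ∀ a, phiL l⁻¹ (phiL l a) = a := by
    intro a; funext i; fin_cases i <;>
      simp [phiL, Matrix.cons_val_zero, Matrix.cons_val_one] <;> field_simp <;> ring
  have hinv' : ∀ a, phiL l (phiL l⁻¹ a) = a := by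
    intro a; funext i; fin_cases i <;>
      simp [phiL, Matrix.cons_val_zero, Matrix.cons_val_one] <;> field_simp <;> ring
  refine ⟨LinearEquiv.ofLinear (phiL l) (phiL l⁻¹)
    (LinearMap.ext hinv') (LinearMap.ext hinv), ?_⟩
  have key : ∀ i j : Fin 5, phiL l (br₁ (e i) (e j)) = br₂ (phiL l (e i)) (phiL l (e j)) := by
    intro i j
    rw [h₁]
    fin_cases i <;> fin_cases j <;>
      simp [c147, phiL_e0, phiL_e1, phiL_e2, phiL_e3, phiL_e4, h₂, hl,
        map_smul, LinearMap.map_smul₂, smul_smul] <;>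
      first
      | rfl
      | rw [mul_inv_cancel₀ hα, one_smul]
      | rw [show l ^ 2 * l = l ^ 3 by ring, hl]
      | rw [show l * l = l ^ 2 by ring]
  have main : (br₁.compr₂ (phiL l)) = (br₂.compl₁₂ (phiL l) (phiL l)) := by
    apply LinearMap.ext_basis (Pi.basisFun ℂ (Fin 5)) (Pi.basisFun ℂ (Fin 5))
    intro i j
    have hb : ∀ k : Fin 5, (Pi.basisFun ℂ (Fin 5)) k = e k := by
      intro k; funext m; simp [Pi.basisFun_apply, e]
    simpa [LinearMap.compr₂_apply, LinearMap.compl₁₂_apply, hb] using key i j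
  intro a b
  have := LinearMap.congr_fun (LinearMap.congr_fun main a) b
  simpa [LinearMap.compr₂_apply, LinearMap.compl₁₂_apply] using this
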